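/- For any linear contraction A : 𝒟 → 𝒟_*, the defect operators of the perturbed operator U_A satisfy I − U_A*U_A = (I_𝒟 − A*A)∘P and I − U_A U_A* = (I_{𝒟_*} − A A*)∘P_* (where the finite-rank operators on the right are composed with the inclusions of 𝒟 and 𝒟_* into H); consequently (I − U_A*U_A)^{1/2} = (I_𝒟 − A*A)^{1/2}∘P and (I − U_A U_A*)^{1/2} = (I_{𝒟_*} − A A*)^{1/2}∘P_*. -/

import Mathlib

open MeasureTheory Filter ContinuousLinearMap
open scoped ENNReal Topology

noncomputable section

/-- A contraction is *completely non-unitary* if there is no nonzero closed subspace,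
invariant under both the operator and its adjoint, on which it restricts to a unitary. -/
def IsCnu {H : Type*} [NormedAddCommGroup H] [InnerProductSpace ℂ H] [CompleteSpace H]
    (U : H →L[ℂ] H) : Prop :=
  ∀ K : Submodule ℂ H, IsClosed (K : Set H) →
    (∀ x ∈ K, U x ∈ K) → (∀ x ∈ K, ContinuousLinearMap.adjoint U x ∈ K) →
    (∀ x ∈ K, ‖U x‖ = ‖x‖) → (∀ y ∈ K, ∃ x ∈ K, U x = y) → K = ⊥

/-- Normalized Lebesgue (arclength) measure on the unit circle `𝕋`, as a measure on `ℂ`. -/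
def mCircle : Measure ℂ :=
  (ENNReal.ofReal (2 * Real.pi))⁻¹ •
    (volume.restrict (Set.Ioc (0:ℝ) (2 * Real.pi))).map (circleMap 0 1)

/-- The characteristic function `Θ(z) = -U₀ + z D₊ (I - z U₀*)⁻¹ D` of a contraction `U₀`
with defect operators `D`, `Dstar`, as an operator on all of `H` (to be restricted to the
defect space `𝒟`). -/
def charFun {H : Type*} [NormedAddCommGroup H] [InnerProductSpace ℂ H] [CompleteSpace H]
    (U₀ D Dstar : H →L[ℂ] H) (z : ℂ) : H →L[ℂ] H :=
  -U₀ + z • (Dstar ∘L Ring.inverse (1 - z • ContinuousLinearMap.adjoint U₀) ∘L D)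

/-- `T^{(k)}`: nonnegative powers of `T`; powers of the adjoint for negative `k`. -/
def zpowOp {H : Type*} [NormedAddCommGroup H] [InnerProductSpace ℂ H] [CompleteSpace H]
    (T : H →L[ℂ] H) (k : ℤ) : H →L[ℂ] H :=
  if 0 ≤ k then T ^ k.toNat else (ContinuousLinearMap.adjoint T) ^ (-k).toNat

/-- At `ξ ∈ 𝕋`, the radial limit of `Θ` restricted to `𝒟` exists in operator norm and is a
unitary operator from `𝒟` onto `𝒟₊`. -/
def HasUnitaryRadialLimitAt {H : Type*} [NormedAddCommGroup H] [InnerProductSpace ℂ H]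
    [CompleteSpace H] (Dsp DspStar : Submodule ℂ H) (Θ : ℂ → (H →L[ℂ] H)) (ξ : ℂ) : Prop :=
  ∃ L : ↥Dsp →L[ℂ] H,
    Tendsto (fun r : ℝ => (Θ ((r : ℂ) * ξ)).comp Dsp.subtypeL) (𝓝[<] (1:ℝ)) (𝓝 L) ∧
      (∀ x : ↥Dsp, ‖L x‖ = ‖x‖) ∧ LinearMap.range (L : ↥Dsp →ₗ[ℂ] H) = DspStar

/-!
A self-adjoint `D` vanishes on `(closure (range D))ᗮ`, so `U₀* U₀ = I - D²` is the identity on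
`𝒟ᗮ`; and for `x ∈ 𝒟ᗮ` we get `D_*² (U₀ x) = U₀ x - U₀ U₀* U₀ x = 0`, so `U₀` maps `𝒟ᗮ`
isometrically into `𝒟_*ᗮ`. Hence `U_A` is `U₀` from `𝒟ᗮ` to `𝒟_*ᗮ` and `A` from `𝒟` to `𝒟_*`,
which gives `U_A* U_A = Pᗮ + A* A P`. Since `U_A*` is the same construction for `U₀*` and `A*`,
the second identity follows by symmetry. Finally `S ∘ P` is positive with square
`(I - A* A) ∘ P = I - U_A* U_A`, so uniqueness of positive square roots gives `D_A = S ∘ P`.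
-/

open scoped InnerProduct

section Defect

variable {𝕜 H : Type*} [RCLike 𝕜] [NormedAddCommGroup H] [InnerProductSpace 𝕜 H] [CompleteSpace H]

theorem IsSelfAdjoint.mem_orthogonal_closure_range_iff {D : H →L[𝕜] H} (hD : IsSelfAdjoint D)
    {x : H} : x ∈ (LinearMap.range (D : H →ₗ[𝕜] H)).topologicalClosureᗮ ↔ D x = 0 := by
  rw [Submodule.orthogonal_closure, ContinuousLinearMap.orthogonal_range, hD.adjoint_eq]
  rfl

theorem IsSelfAdjoint.apply_eq_zero_of_apply_apply_eq_zero {D : H →L[𝕜] H}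
    (hD : IsSelfAdjoint D) {x : H} (hx : D (D x) = 0) : D x = 0 := by
  have hx' : x ∈ (D† ∘L D).ker := by rwa [hD.adjoint_eq]
  rwa [ContinuousLinearMap.ker_adjoint_comp_self] at hx'

variable {U D Dstar : H →L[𝕜] H}

theorem adjoint_apply_apply_eq_self_of_defect (hD : IsSelfAdjoint D)
    (hDD : D ∘L D = 1 - U† ∘L U) {x : H}
    (hx : x ∈ (LinearMap.range (D : H →ₗ[𝕜] H)).topologicalClosureᗮ) : (U†) (U x) = x := by
  have := congr($hDD x)
  simp only [ContinuousLinearMap.comp_apply, hD.mem_orthogonal_closure_range_iff.mp hx, map_zero,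
    sub_apply, one_apply_eq_self] at this
  exact (sub_eq_zero.mp this.symm).symm

theorem apply_mem_orthogonal_of_defect (hDstar : IsSelfAdjoint Dstar)
    (hDsDs : Dstar ∘L Dstar = 1 - U ∘L U†) {x : H} (hx : (U†) (U x) = x) :
    U x ∈ (LinearMap.range (Dstar : H →ₗ[𝕜] H)).topologicalClosureᗮ := by
  refine hDstar.mem_orthogonal_closure_range_iff.mpr
    (hDstar.apply_eq_zero_of_apply_apply_eq_zero ?_)
  have := congr($hDsDs (U x))
  simpa only [ContinuousLinearMap.comp_apply, sub_apply,
    one_apply_eq_self, hx, sub_self] using this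

theorem apply_mem_orthogonal_and_adjoint_apply_apply_of_defect (hD : IsSelfAdjoint D)
    (hDstar : IsSelfAdjoint Dstar) (hDD : D ∘L D = 1 - U† ∘L U)
    (hDsDs : Dstar ∘L Dstar = 1 - U ∘L U†) :
    ∀ x ∈ (LinearMap.range (D : H →ₗ[𝕜] H)).topologicalClosureᗮ,
      U x ∈ (LinearMap.range (Dstar : H →ₗ[𝕜] H)).topologicalClosureᗮ ∧ (U†) (U x) = x :=
  fun _ hx ↦
    have hUx := adjoint_apply_apply_eq_self_of_defect hD hDD hx
    ⟨apply_mem_orthogonal_of_defect hDstar hDsDs hUx, hUx⟩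

end Defect

section Perturbation

variable {𝕜 H : Type*} [RCLike 𝕜] [NormedAddCommGroup H] [InnerProductSpace 𝕜 H]
  (K Kstar : Submodule 𝕜 H) [CompleteSpace K] [CompleteSpace Kstar]

def perturbation (U : H →L[𝕜] H) (A : K →L[𝕜] Kstar) : H →L[𝕜] H :=
  (1 - Kstar.subtypeL ∘L Kstar.orthogonalProjectionOnto) ∘L U ∘L
      (1 - K.subtypeL ∘L K.orthogonalProjectionOnto)
    + Kstar.subtypeL ∘L A ∘L K.orthogonalProjectionOnto

variable {K Kstar}

theorem subtypeL_comp_comp_orthogonalProjectionOnto_comp (S T : K →L[𝕜] K) :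
    (K.subtypeL ∘L S ∘L K.orthogonalProjectionOnto) ∘L
        (K.subtypeL ∘L T ∘L K.orthogonalProjectionOnto) =
      K.subtypeL ∘L (S ∘L T) ∘L K.orthogonalProjectionOnto := by
  ext1 x
  simp only [comp_apply, Submodule.subtypeL_apply,
    Submodule.orthogonalProjectionOnto_mem_subspace_eq_self]

theorem adjoint_perturbation [CompleteSpace H] (U : H →L[𝕜] H) (A : K →L[𝕜] Kstar) :
    (perturbation K Kstar U A)† = perturbation Kstar K (U†) (A†) := by
  simp only [perturbation, map_add, map_sub, adjoint_comp, adjoint_one, Submodule.adjoint_subtypeL,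
    Submodule.adjoint_orthogonalProjectionOnto, comp_assoc]

theorem perturbation_eq (U : H →L[𝕜] H) (A : K →L[𝕜] Kstar) :
    perturbation K Kstar U A = Kstarᗮ.starProjection ∘L U ∘L Kᗮ.starProjection
      + Kstar.subtypeL ∘L A ∘L K.orthogonalProjectionOnto := by
  simp only [perturbation, Submodule.starProjection_orthogonal']
  rfl

theorem one_sub_adjoint_perturbation_comp_perturbation [CompleteSpace H] {U : H →L[𝕜] H}
    (A : K →L[𝕜] Kstar) (hU : ∀ x ∈ Kᗮ, U x ∈ Kstarᗮ ∧ (U†) (U x) = x) :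
    1 - (perturbation K Kstar U A)† ∘L perturbation K Kstar U A =
      K.subtypeL ∘L (1 - A† ∘L A) ∘L K.orthogonalProjectionOnto := by
  ext1 x
  obtain ⟨hUx, hUUx⟩ := hU _ (Kᗮ.starProjection_apply_mem x)
  have hUAx : perturbation K Kstar U A x =
      U (Kᗮ.starProjection x) + (A (K.orthogonalProjectionOnto x) : H) := by
    rw [perturbation_eq, add_apply, comp_apply, comp_apply, comp_apply, comp_apply,
      Submodule.starProjection_eq_self_iff.mpr hUx, Submodule.subtypeL_apply]
  have hπ : Kstar.orthogonalProjectionOnto (perturbation K Kstar U A x) =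
      A (K.orthogonalProjectionOnto x) := by
    rw [hUAx, map_add, Submodule.orthogonalProjectionOnto_apply_of_mem_orthogonal hUx,
      Submodule.orthogonalProjectionOnto_mem_subspace_eq_self, zero_add]
  have hπ_orth : Kstarᗮ.starProjection (perturbation K Kstar U A x) =
      U (Kᗮ.starProjection x) := by
    rw [hUAx, map_add, Submodule.starProjection_eq_self_iff.mpr hUx,
      Submodule.starProjection_orthogonal_apply_eq_zero (A (K.orthogonalProjectionOnto x)).2,
      add_zero]
  rw [sub_apply, comp_apply, adjoint_perturbation, perturbation_eq, add_apply, comp_apply,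
    comp_apply, comp_apply, comp_apply, hπ_orth, hUUx, hπ,
    Submodule.starProjection_eq_self_iff.mpr (Kᗮ.starProjection_apply_mem x),
    Submodule.starProjection_orthogonal_val]
  simp only [one_apply_eq_self, comp_apply, sub_apply, map_sub, Submodule.starProjection_apply,
    Submodule.subtypeL_apply]
  abel

end Perturbation

section SquareRoot

variable {H : Type*} [NormedAddCommGroup H] [InnerProductSpace ℂ H] [CompleteSpace H]

theorem ContinuousLinearMap.IsPositive.eq_of_comp_self_eq {T₁ T₂ : H →L[ℂ] H}
    (h₁ : T₁.IsPositive) (h₂ : T₂.IsPositive) (h : T₁ ∘L T₁ = T₂ ∘L T₂) : T₁ = T₂ :=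
  (CFC.mul_self_eq_mul_self_iff T₁ T₂ ((nonneg_iff_isPositive T₁).mpr h₁)
    ((nonneg_iff_isPositive T₂).mpr h₂)).mp h

variable {K : Submodule ℂ H} [CompleteSpace K]

theorem ContinuousLinearMap.IsPositive.subtypeL_comp_comp_orthogonalProjectionOnto
    {S : K →L[ℂ] K} (hS : S.IsPositive) :
    (K.subtypeL ∘L S ∘L K.orthogonalProjectionOnto).IsPositive := by
  simpa only [Submodule.adjoint_subtypeL] using hS.conj_adjoint K.subtypeL

theorem ContinuousLinearMap.IsPositive.eq_subtypeL_comp_comp_orthogonalProjectionOnto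
    {R : H →L[ℂ] H} (hR : R.IsPositive) {S : K →L[ℂ] K} (hS : S.IsPositive)
    (hRS : R ∘L R = K.subtypeL ∘L (S ∘L S) ∘L K.orthogonalProjectionOnto) :
    R = K.subtypeL ∘L S ∘L K.orthogonalProjectionOnto :=
  hR.eq_of_comp_self_eq hS.subtypeL_comp_comp_orthogonalProjectionOnto <| by
    rw [hRS, subtypeL_comp_comp_orthogonalProjectionOnto_comp]

end SquareRoot

theorem statement13_general
    {H : Type*} [NormedAddCommGroup H] [InnerProductSpace ℂ H] [CompleteSpace H]
    (U₀ : H →L[ℂ] H)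
    (D Dstar : H →L[ℂ] H)
    (hDpos : D.IsPositive) (hD : D ∘L D = 1 - ContinuousLinearMap.adjoint U₀ ∘L U₀)
    (hDspos : Dstar.IsPositive)
    (hDs : Dstar ∘L Dstar = 1 - U₀ ∘L ContinuousLinearMap.adjoint U₀)
    (Dsp DspStar : Submodule ℂ H)
    (hDsp : Dsp = (LinearMap.range (D : H →ₗ[ℂ] H)).topologicalClosure)
    (hDspStar : DspStar = (LinearMap.range (Dstar : H →ₗ[ℂ] H)).topologicalClosure)
    [FiniteDimensional ℂ ↥Dsp] [FiniteDimensional ℂ ↥DspStar]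
    (A : ↥Dsp →L[ℂ] ↥DspStar)
    (UA : H →L[ℂ] H)
    (hUA : UA =
      ((1 : H →L[ℂ] H) - DspStar.subtypeL ∘L (DspStar.orthogonalProjectionOnto : H →L[ℂ] ↥DspStar))
          ∘L U₀ ∘L
          ((1 : H →L[ℂ] H) - Dsp.subtypeL ∘L (Dsp.orthogonalProjectionOnto : H →L[ℂ] ↥Dsp))
        + DspStar.subtypeL ∘L A ∘L (Dsp.orthogonalProjectionOnto : H →L[ℂ] ↥Dsp))
    -- `S` and `Sstar` are the positive square roots of `I_𝒟 - A*A` and `I_𝒟* - A A*`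
    (S : ↥Dsp →L[ℂ] ↥Dsp) (hSpos : S.IsPositive)
    (hS : S ∘L S = 1 - ContinuousLinearMap.adjoint A ∘L A)
    (Sstar : ↥DspStar →L[ℂ] ↥DspStar) (hSstarpos : Sstar.IsPositive)
    (hSstar : Sstar ∘L Sstar = 1 - A ∘L ContinuousLinearMap.adjoint A)
    -- `DA` and `DAstar` are the positive square roots of `I - U_A* U_A` and `I - U_A U_A*`
    (DA : H →L[ℂ] H) (hDApos : DA.IsPositive)
    (hDA : DA ∘L DA = 1 - ContinuousLinearMap.adjoint UA ∘L UA)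
    (DAstar : H →L[ℂ] H) (hDAstarpos : DAstar.IsPositive)
    (hDAstar : DAstar ∘L DAstar = 1 - UA ∘L ContinuousLinearMap.adjoint UA) :
    ((1 : H →L[ℂ] H) - ContinuousLinearMap.adjoint UA ∘L UA =
        Dsp.subtypeL ∘L ((1 : ↥Dsp →L[ℂ] ↥Dsp) - ContinuousLinearMap.adjoint A ∘L A) ∘L
          (Dsp.orthogonalProjectionOnto : H →L[ℂ] ↥Dsp)) ∧
    ((1 : H →L[ℂ] H) - UA ∘L ContinuousLinearMap.adjoint UA =
        DspStar.subtypeL ∘L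
          ((1 : ↥DspStar →L[ℂ] ↥DspStar) - A ∘L ContinuousLinearMap.adjoint A) ∘L
          (DspStar.orthogonalProjectionOnto : H →L[ℂ] ↥DspStar)) ∧
    DA = Dsp.subtypeL ∘L S ∘L (Dsp.orthogonalProjectionOnto : H →L[ℂ] ↥Dsp) ∧
    DAstar = DspStar.subtypeL ∘L Sstar ∘L
      (DspStar.orthogonalProjectionOnto : H →L[ℂ] ↥DspStar) := by
  have hU₀ : ∀ x ∈ Dspᗮ, U₀ x ∈ DspStarᗮ ∧ (U₀†) (U₀ x) = x := by
    rw [hDsp, hDspStar]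
    exact apply_mem_orthogonal_and_adjoint_apply_apply_of_defect hDpos.isSelfAdjoint
      hDspos.isSelfAdjoint hD hDs
  have hU₀adj : ∀ x ∈ DspStarᗮ, (U₀†) x ∈ Dspᗮ ∧ (U₀††) ((U₀†) x) = x := by
    rw [hDsp, hDspStar]
    exact apply_mem_orthogonal_and_adjoint_apply_apply_of_defect hDspos.isSelfAdjoint
      hDpos.isSelfAdjoint (by rwa [adjoint_adjoint]) (by rwa [adjoint_adjoint])
  replace hUA : UA = perturbation Dsp DspStar U₀ A := hUA
  have hdefect : 1 - UA† ∘L UA = Dsp.subtypeL ∘L (1 - A† ∘L A) ∘L Dsp.orthogonalProjectionOnto :=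
    hUA ▸ one_sub_adjoint_perturbation_comp_perturbation A hU₀
  have hdefectStar :
      1 - UA ∘L UA† = DspStar.subtypeL ∘L (1 - A ∘L A†) ∘L DspStar.orthogonalProjectionOnto := by
    have := one_sub_adjoint_perturbation_comp_perturbation (A†) hU₀adj
    rwa [← adjoint_perturbation, ← hUA, adjoint_adjoint, adjoint_adjoint] at this
  refine ⟨hdefect, hdefectStar, ?_, ?_⟩
  · exact hDApos.eq_subtypeL_comp_comp_orthogonalProjectionOnto hSpos (by rw [hDA, hdefect, hS])
  · exact hDAstarpos.eq_subtypeL_comp_comp_orthogonalProjectionOnto hSstarpos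
      (by rw [hDAstar, hdefectStar, hSstar])

theorem statement13
    {H : Type*} [NormedAddCommGroup H] [InnerProductSpace ℂ H] [CompleteSpace H]
    [TopologicalSpace.SeparableSpace H]
    (U₀ : H →L[ℂ] H) (hU₀ : ‖U₀‖ ≤ 1) (hcnu : IsCnu U₀)
    (D Dstar : H →L[ℂ] H)
    (hDpos : D.IsPositive) (hD : D ∘L D = 1 - ContinuousLinearMap.adjoint U₀ ∘L U₀)
    (hDspos : Dstar.IsPositive)
    (hDs : Dstar ∘L Dstar = 1 - U₀ ∘L ContinuousLinearMap.adjoint U₀)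
    (Dsp DspStar : Submodule ℂ H)
    (hDsp : Dsp = (LinearMap.range (D : H →ₗ[ℂ] H)).topologicalClosure)
    (hDspStar : DspStar = (LinearMap.range (Dstar : H →ₗ[ℂ] H)).topologicalClosure)
    [FiniteDimensional ℂ ↥Dsp] [FiniteDimensional ℂ ↥DspStar]
    (n : ℕ) (hn : Module.finrank ℂ ↥Dsp = n) (hns : Module.finrank ℂ ↥DspStar = n)
    (A : ↥Dsp →L[ℂ] ↥DspStar) (hA : ‖A‖ ≤ 1)
    (UA : H →L[ℂ] H)
    (hUA : UA =
      ((1 : H →L[ℂ] H) - DspStar.subtypeL ∘L (DspStar.orthogonalProjectionOnto : H →L[ℂ] ↥DspStar))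
          ∘L U₀ ∘L
          ((1 : H →L[ℂ] H) - Dsp.subtypeL ∘L (Dsp.orthogonalProjectionOnto : H →L[ℂ] ↥Dsp))
        + DspStar.subtypeL ∘L A ∘L (Dsp.orthogonalProjectionOnto : H →L[ℂ] ↥Dsp))
    -- `S` and `Sstar` are the positive square roots of `I_𝒟 - A*A` and `I_𝒟* - A A*`
    (S : ↥Dsp →L[ℂ] ↥Dsp) (hSpos : S.IsPositive)
    (hS : S ∘L S = 1 - ContinuousLinearMap.adjoint A ∘L A)
    (Sstar : ↥DspStar →L[ℂ] ↥DspStar) (hSstarpos : Sstar.IsPositive)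
    (hSstar : Sstar ∘L Sstar = 1 - A ∘L ContinuousLinearMap.adjoint A)
    -- `DA` and `DAstar` are the positive square roots of `I - U_A* U_A` and `I - U_A U_A*`
    (DA : H →L[ℂ] H) (hDApos : DA.IsPositive)
    (hDA : DA ∘L DA = 1 - ContinuousLinearMap.adjoint UA ∘L UA)
    (DAstar : H →L[ℂ] H) (hDAstarpos : DAstar.IsPositive)
    (hDAstar : DAstar ∘L DAstar = 1 - UA ∘L ContinuousLinearMap.adjoint UA) :
    ((1 : H →L[ℂ] H) - ContinuousLinearMap.adjoint UA ∘L UA =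
        Dsp.subtypeL ∘L ((1 : ↥Dsp →L[ℂ] ↥Dsp) - ContinuousLinearMap.adjoint A ∘L A) ∘L
          (Dsp.orthogonalProjectionOnto : H →L[ℂ] ↥Dsp)) ∧
    ((1 : H →L[ℂ] H) - UA ∘L ContinuousLinearMap.adjoint UA =
        DspStar.subtypeL ∘L
          ((1 : ↥DspStar →L[ℂ] ↥DspStar) - A ∘L ContinuousLinearMap.adjoint A) ∘L
          (DspStar.orthogonalProjectionOnto : H →L[ℂ] ↥DspStar)) ∧
    DA = Dsp.subtypeL ∘L S ∘L (Dsp.orthogonalProjectionOnto : H →L[ℂ] ↥Dsp) ∧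
    DAstar = DspStar.subtypeL ∘L Sstar ∘L
      (DspStar.orthogonalProjectionOnto : H →L[ℂ] ↥DspStar) :=
  statement13_general U₀ D Dstar hDpos hD hDspos hDs Dsp DspStar hDsp hDspStar A UA hUA S hSpos hS
    Sstar hSstarpos hSstar DA hDApos hDA DAstar hDAstarpos hDAstar
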